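/- arXiv:1302.2655 — 2 statements merged into one kernel-verified Lean document; each statement's English description precedes it below -/
import Mathlib

section
/- Let H be a simple quasi-cubic graph that has at least one vertex of degree 3 but is not cubic, and let e₁, e₂, …, eₙ be the edges of H that are incident to a vertex of degree 1. If γ is any edge-3-coloring of H, then γ(e₁) + γ(e₂) + ⋯ + γ(eₙ) = 0 in the group Z₂×Z₂ (Parity Lemma). -/
namespace SnarkPaper

open SimpleGraph

/-- The color group `Z₂ × Z₂`. -/
abbrev Color : Type := ZMod 2 × ZMod 2

/-- The color `a = (0,1)`. -/
def colA : Color := (0, 1)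
/-- The color `b = (1,0)`. -/
def colB : Color := (1, 0)
/-- The color `c = (1,1)`. -/
def colC : Color := (1, 1)

/-- The set of the three nonzero elements of `Z₂ × Z₂` used as colors. -/
def colorSet : Set Color := {colA, colB, colC}

variable {V V₁ V₂ : Type*}

/-- Two edges are adjacent if they are distinct and share an endpoint. -/
def EdgesAdj (e f : Sym2 V) : Prop := e ≠ f ∧ ∃ x, x ∈ e ∧ x ∈ f

/-- The set of edge-3-colorings of `G`: functions assigning to each edge of `G` one of the
three nonzero elements of `Z₂ × Z₂` so that adjacent edges get distinct values (and pinned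
to `0` off the edge set, so that counting colorings is faithful). -/
def EC (G : SimpleGraph V) : Set (Sym2 V → Color) :=
  {γ | (∀ e ∈ G.edgeSet, γ e ∈ colorSet) ∧ (∀ e ∉ G.edgeSet, γ e = 0) ∧
       ∀ e ∈ G.edgeSet, ∀ f ∈ G.edgeSet, EdgesAdj e f → γ e ≠ γ f}

/-- The set of 3-edge-decompositions of `G`: partitions of the edge set of `G` into three
classes such that no two adjacent edges lie in the same class. -/
def ED (G : SimpleGraph V) : Set (Set (Set (Sym2 V))) :=
  {D | D.ncard = 3 ∧ (∀ s ∈ D, s ⊆ G.edgeSet) ∧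
       (∀ e ∈ G.edgeSet, ∃! s, s ∈ D ∧ e ∈ s) ∧
       (∀ s ∈ D, ∀ e ∈ s, ∀ f ∈ s, ¬ EdgesAdj e f)}

/-- Two edges lie in the same class of the decomposition `D`. -/
def SameClass (D : Set (Set (Sym2 V))) (e f : Sym2 V) : Prop :=
  ∃ s ∈ D, e ∈ s ∧ f ∈ s

/-- A graph is cubic if every vertex has degree 3. -/
def IsCubic (G : SimpleGraph V) : Prop := ∀ v, (G.neighborSet v).ncard = 3

/-- A graph is quasi-cubic if every vertex has degree 1 or 3. -/
def IsQuasiCubic (G : SimpleGraph V) : Prop :=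
  ∀ v, (G.neighborSet v).ncard = 1 ∨ (G.neighborSet v).ncard = 3

/-- `G` is cyclically `n`-edge-connected: for any two vertex-disjoint cycles `C₁`, `C₂` and
any set `S` of at most `n-1` edges of `G` containing no edge of `C₁` or `C₂`, deleting `S`
leaves a path from a vertex of `C₁` to a vertex of `C₂`. -/
def CyclicallyEdgeConnected (G : SimpleGraph V) (n : ℕ) : Prop :=
  ∀ ⦃x y : V⦄ (C₁ : G.Walk x x) (C₂ : G.Walk y y), C₁.IsCycle → C₂.IsCycle →
    (∀ w, w ∈ C₁.support → w ∉ C₂.support) →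
    ∀ S : Set (Sym2 V), S ⊆ G.edgeSet → S.ncard ≤ n - 1 →
      (∀ e ∈ S, e ∉ C₁.edges ∧ e ∉ C₂.edges) →
      ∃ x' ∈ C₁.support, ∃ y' ∈ C₂.support, (G.deleteEdges S).Reachable x' y'

/-- A snark: a connected cubic graph with girth at least 5 which is cyclically
4-edge-connected and admits no edge-3-coloring. -/
def IsSnark (G : SimpleGraph V) : Prop :=
  G.Connected ∧ IsCubic G ∧ 5 ≤ G.girth ∧ CyclicallyEdgeConnected G 4 ∧ EC G = ∅

/-- The edges `d₁` and `d₂` lie in a common (two-colored) Kempe cycle for the coloring `γ`. -/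
def InCommonKempeCycle (G : SimpleGraph V) (γ : Sym2 V → Color) (d₁ d₂ : Sym2 V) : Prop :=
  ∃ x ∈ colorSet, ∃ y ∈ colorSet, x ≠ y ∧
    ∃ (a : V) (C : G.Walk a a), C.IsCycle ∧
      (∀ e ∈ C.edges, γ e = x ∨ γ e = y) ∧ d₁ ∈ C.edges ∧ d₂ ∈ C.edges

/-- Two edges of `G` are orthogonal if no edge-3-coloring of `G` puts them in a common
Kempe cycle. -/
def OrthogonalEdges (G : SimpleGraph V) (d₁ d₂ : Sym2 V) : Prop :=
  d₁ ∈ G.edgeSet ∧ d₂ ∈ G.edgeSet ∧ ∀ γ ∈ EC G, ¬ InCommonKempeCycle G γ d₁ d₂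

/-- The graph `G_e` for the edge `e = s(u,v)`: delete `u`, `v` and the five edges incident
to them (leaving `u` and `v` as isolated vertices), and add the new edge `d₁` joining the two
other neighbors of `u` and the new edge `d₂` joining the two other neighbors of `v`. -/
def edgeDeleted (G : SimpleGraph V) (u v : V) : SimpleGraph V :=
  SimpleGraph.fromEdgeSet
    ({e ∈ G.edgeSet | u ∉ e ∧ v ∉ e} ∪
     {e | ∃ x y, e = s(x, y) ∧ x ≠ y ∧ G.Adj u x ∧ G.Adj u y ∧ x ≠ v ∧ y ≠ v} ∪
     {e | ∃ x y, e = s(x, y) ∧ x ≠ y ∧ G.Adj v x ∧ G.Adj v y ∧ x ≠ u ∧ y ≠ u})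


/-!
The colors around a vertex of degree 3 are `a`, `b`, `c`, which sum to `0`; around a leaf the
single color is that of its pendant edge. Summing over all vertices counts every edge twice,
hence gives `0` in `Z₂ × Z₂`, so the colors of the pendant edges sum to `0` as well. This needs
each pendant edge to have only one leaf as endpoint, which holds because an edge joining two
leaves would be a whole component, while `H` is connected and has a vertex of degree 3.
-/

open Finset

section Graph

variable {G : SimpleGraph V}

theorem ncard_neighborSet_eq_degree (v : V) [Fintype (G.neighborSet v)] :
    (G.neighborSet v).ncard = G.degree v := by
  rw [Set.ncard_eq_toFinset_card']
  rfl

theorem neighborSet_eq_singleton_of_ncard_eq_one {u v : V} (huv : G.Adj u v)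
    (hu : (G.neighborSet u).ncard = 1) : G.neighborSet u = {v} := by
  obtain ⟨x, hx⟩ := Set.ncard_eq_one.mp hu
  have hv : v ∈ ({x} : Set V) := hx ▸ huv
  rw [hx, Set.mem_singleton_iff.mp hv]

theorem eq_or_eq_of_adj_of_ncard_neighborSet_eq_one (hG : G.Preconnected) {u v : V}
    (huv : G.Adj u v) (hu : (G.neighborSet u).ncard = 1) (hv : (G.neighborSet v).ncard = 1)
    (w : V) : w = u ∨ w = v := by
  have hclosed : ∀ a ∈ ({u, v} : Set V), ∀ b, G.Adj a b → b ∈ ({u, v} : Set V) := by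
    rintro a (rfl | rfl) b hab
    · have hb : b ∈ G.neighborSet a := hab
      rw [neighborSet_eq_singleton_of_ncard_eq_one huv hu] at hb
      exact Or.inr hb
    · have hb : b ∈ G.neighborSet a := hab
      rw [neighborSet_eq_singleton_of_ncard_eq_one huv.symm hv] at hb
      exact Or.inl hb
  by_contra hw
  obtain ⟨d, -, hd, hd'⟩ :=
    (hG u w).some.exists_boundary_dart {u, v} (by simp) (by simpa using hw)
  exact hd' (hclosed _ hd _ d.adj)

variable [Fintype V] [DecidableEq V] [DecidableRel G.Adj]

theorem sum_sum_incidenceFinset_eq_sum_card_smul {M : Type*} [AddCommMonoid M] (A : Finset V)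
    (f : Sym2 V → M) :
    ∑ v ∈ A, ∑ e ∈ G.incidenceFinset v, f e = ∑ e ∈ G.edgeFinset, #{v ∈ A | v ∈ e} • f e := by
  rw [sum_comm' (t' := G.edgeFinset) (s' := fun e => {v ∈ A | v ∈ e})]
  · simp only [sum_const]
  · intro v e
    simp only [mem_incidenceFinset, incidenceSet, Set.mem_ofPred_eq, mem_filter,
      mem_edgeFinset]
    tauto

theorem sum_sum_incidenceFinset_eq_zero {M : Type*} [AddCommMonoid M]
    (hM : ∀ x : M, x + x = 0) (f : Sym2 V → M) :
    ∑ v, ∑ e ∈ G.incidenceFinset v, f e = 0 := by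
  rw [sum_sum_incidenceFinset_eq_sum_card_smul]
  refine sum_eq_zero fun e he => ?_
  induction e with
  | h a b =>
    have hab : a ≠ b := G.ne_of_adj (mem_edgeFinset.mp he)
    have hends : ({v | v ∈ s(a, b)} : Finset V) = {a, b} := by
      ext; simp
    rw [hends, card_pair hab, two_nsmul, hM]

theorem sum_sum_incidenceFinset_of_isIndepSet {M : Type*} [AddCommMonoid M] {L : Finset V}
    (hL : G.IsIndepSet L) (f : Sym2 V → M) :
    ∑ v ∈ L, ∑ e ∈ G.incidenceFinset v, f e = ∑ e ∈ G.edgeFinset with ∃ v ∈ L, v ∈ e, f e := by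
  rw [← sum_biUnion]
  · congr 1
    ext e
    simp only [mem_biUnion, mem_incidenceFinset, incidenceSet, Set.mem_ofPred_eq,
      mem_filter, mem_edgeFinset]
    tauto
  · intro u hu w hw huw
    refine disjoint_left.mpr fun e heu hew => hL hu hw huw ?_
    rw [mem_incidenceFinset] at heu hew
    rw [← mem_edgeSet, ← (Sym2.mem_and_mem_iff huw).mp ⟨heu.2, hew.2⟩]
    exact heu.1

end Graph

theorem sum_eq_zero_of_subset_colorSet (t : Finset Color) (ht : ↑t ⊆ colorSet) (hcard : #t = 3) :
    ∑ x ∈ t, x = 0 := by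
  have htop : t = {colA, colB, colC} :=
    eq_of_subset_of_card_le (fun x hx => by simpa [colorSet] using ht hx)
      (by rw [hcard]; decide)
  rw [htop]
  decide

theorem injOn_incidenceSet_of_mem_EC {G : SimpleGraph V} {γ : Sym2 V → Color} (hγ : γ ∈ EC G)
    (v : V) :
    Set.InjOn γ (G.incidenceSet v) := by
  intro e he f hf hef
  by_contra hne
  exact hγ.2.2 e he.1 f hf.1 ⟨hne, v, he.2, hf.2⟩ hef

theorem sum_incidenceFinset_eq_zero_of_mem_EC [Fintype V] [DecidableEq V] {G : SimpleGraph V}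
    [DecidableRel G.Adj] {γ : Sym2 V → Color} (hγ : γ ∈ EC G) {v : V} (hv : G.degree v = 3) :
    ∑ e ∈ G.incidenceFinset v, γ e = 0 := by
  have hinj : Set.InjOn γ (G.incidenceFinset v) := by
    simpa using injOn_incidenceSet_of_mem_EC hγ v
  calc ∑ e ∈ G.incidenceFinset v, γ e = ∑ x ∈ (G.incidenceFinset v).image γ, x :=
        (sum_image (f := id) hinj).symm
    _ = 0 := by
      apply sum_eq_zero_of_subset_colorSet
      · simpa [Set.subset_def] using fun e he => hγ.1 e he.1
      · rw [card_image_of_injOn hinj, card_incidenceFinset_eq_degree, hv]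

theorem statement_0_general {V : Type*} [Fintype V] (H : SimpleGraph V)
    (hconn : H.Connected) (hquasi : IsQuasiCubic H)
    (h3 : ∃ w, (H.neighborSet w).ncard = 3)
    (γ : Sym2 V → Color) (hγ : γ ∈ EC H) :
    (∑ᶠ e ∈ {e : Sym2 V | e ∈ H.edgeSet ∧ ∃ x ∈ e, (H.neighborSet x).ncard = 1}, γ e)
      = (0 : Color) := by
  classical
  set L : Finset V := {v | (H.neighborSet v).ncard = 1}
  have hL : H.IsIndepSet L := by
    intro u hu v hv _ huv
    obtain ⟨w, hw⟩ := h3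
    simp only [L, coe_filter, mem_univ, true_and, Set.mem_ofPred_eq] at hu hv
    rcases eq_or_eq_of_adj_of_ncard_neighborSet_eq_one hconn.preconnected huv hu hv w
      with rfl | rfl <;> omega
  have hleaves : ∑ v ∈ L, ∑ e ∈ H.incidenceFinset v, γ e = 0 := by
    rw [sum_subset (subset_univ L), sum_sum_incidenceFinset_eq_zero (by decide)]
    intro v _ hv
    have hv3 := (hquasi v).resolve_left (by simpa [L] using hv)
    exact sum_incidenceFinset_eq_zero_of_mem_EC hγ (by rwa [← ncard_neighborSet_eq_degree])
  rw [sum_sum_incidenceFinset_of_isIndepSet hL] at hleaves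
  have hpendant : {e : Sym2 V | e ∈ H.edgeSet ∧ ∃ x ∈ e, (H.neighborSet x).ncard = 1} =
      ↑({e ∈ H.edgeFinset | ∃ v ∈ L, v ∈ e}) := by
    ext e
    simp [L, and_comm]
  rw [hpendant, finsum_mem_coe_finset, hleaves]

/-- **Parity Lemma.** For a connected quasi-cubic graph `H` with at least one vertex of
degree 3 which is not cubic, and any edge-3-coloring `γ` of `H`, the sum of the colors of
the edges incident to a degree-1 vertex is `0` in `Z₂ × Z₂`. -/
theorem statement_0 {V : Type*} [Fintype V] (H : SimpleGraph V)
    (hconn : H.Connected) (hquasi : IsQuasiCubic H)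
    (h3 : ∃ w, (H.neighborSet w).ncard = 3) (hnc : ¬ IsCubic H)
    (γ : Sym2 V → Color) (hγ : γ ∈ EC H) :
    (∑ᶠ e ∈ {e : Sym2 V | e ∈ H.edgeSet ∧ ∃ x ∈ e, (H.neighborSet x).ncard = 1}, γ e)
      = (0 : Color) :=
  statement_0_general H hconn hquasi h3 γ hγ

end SnarkPaper
end

section
/- Let H be a simple cubic graph that admits an edge-3-coloring, and let d₁ and d₂ be orthogonal edges of H. Then there exists a positive integer J such that: (i) card ED(H) = 3J (and hence card EC(H) = 18J); (ii) card {δ ∈ ED(H) : d₁ ∼ d₂ in δ} = J; and (iii) for every pair of colors x, y ∈ {a,b,c} (equal or not), card {γ ∈ EC(H) : γ(d₁) = x and γ(d₂) = y} = 2J. -/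
namespace SnarkPaper

open SimpleGraph

variable {V V₁ V₂ : Type*}

/-!
A Kempe swap along the `xy`-chain through an end of `d₁` exchanges `x` and `y` on `d₁`. In a
cubic graph that chain is a cycle, so by orthogonality it does not contain `d₂`, whose colour is
kept. These swaps are involutions of `EC H`, so the nine classes `{γ | γ d₁ = x ∧ γ d₂ = y}`
have a common size `N`, whence `#EC H = 9 N` and `#{γ | γ d₁ = γ d₂} = 3 N`. On the other hand
every decomposition is the colour-class partition of exactly `3! = 6` colourings, so
`#EC H = 6 #ED H` and `#{γ | γ d₁ = γ d₂} = 6 J` with `J = #{δ ∈ ED H | SameClass δ d₁ d₂}`.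
Hence `N = 2 J`, `#ED H = 3 J`, `#EC H = 18 J`, and `J > 0` because `H` is colourable.
-/

lemma mem_colorSet_iff_ne_zero {c : Color} : c ∈ colorSet ↔ c ≠ 0 := by
  revert c
  simp only [colorSet, colA, colB, colC, Set.mem_insert_iff, Set.mem_singleton_iff]
  decide

lemma ncard_colorSet : colorSet.ncard = 3 :=
  Set.ncard_eq_three.mpr ⟨colA, colB, colC, by decide, by decide, by decide, rfl⟩

lemma swap_apply_zero {x y : Color} (hx : x ∈ colorSet) (hy : y ∈ colorSet) :
    Equiv.swap x y 0 = 0 :=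
  Equiv.swap_apply_of_ne_of_ne (mem_colorSet_iff_ne_zero.mp hx).symm
    (mem_colorSet_iff_ne_zero.mp hy).symm

lemma swap_mem_colorSet_iff {x y c : Color} (hx : x ∈ colorSet) (hy : y ∈ colorSet) :
    Equiv.swap x y c ∈ colorSet ↔ c ∈ colorSet := by
  rw [mem_colorSet_iff_ne_zero, mem_colorSet_iff_ne_zero]
  nth_rewrite 1 [← swap_apply_zero hx hy]
  exact (Equiv.swap x y).injective.ne_iff

lemma swap_eq_left_or_right_iff {x y c : Color} :
    (Equiv.swap x y c = x ∨ Equiv.swap x y c = y) ↔ (c = x ∨ c = y) := by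
  rw [Equiv.swap_apply_eq_iff, Equiv.swap_apply_eq_iff, Equiv.swap_apply_left,
    Equiv.swap_apply_right, or_comm]

lemma EdgesAdj.symm {e f : Sym2 V} (h : EdgesAdj e f) : EdgesAdj f e :=
  ⟨h.1.symm, h.2.imp fun _ hx => hx.symm⟩

lemma edgesAdj_mk_mk {v w w' : V} (hww' : w ≠ w') : EdgesAdj s(v, w) s(v, w') :=
  ⟨fun h => hww' (Sym2.congr_right.mp h), v, Sym2.mem_mk_left v w, Sym2.mem_mk_left v w'⟩

lemma reachable_of_mem_edge {K : SimpleGraph V} {e : Sym2 V} (he : e ∈ K.edgeSet) {u w z : V}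
    (hw : w ∈ e) (hz : z ∈ e) (huw : K.Reachable u w) : K.Reachable u z := by
  induction e using Sym2.ind with
  | _ a b =>
    rw [Sym2.mem_iff] at hw hz
    rcases hw with rfl | rfl <;> rcases hz with rfl | rfl
    exacts [huw, huw.trans he.reachable, huw.trans he.symm.reachable, huw]

section TwoRegular

variable [Finite V] {K : SimpleGraph V}

/-- Otherwise, in the component of `u` after deleting `uv`, the vertex `u` would be the only one
of odd degree, against the handshake lemma. -/
lemma reachable_deleteEdges_of_even {u v : V} (heven : ∀ w, Even (K.neighborSet w).ncard)
    (huv : K.Adj u v) : (K.deleteEdges {s(u, v)}).Reachable u v := by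
  classical
  have := Fintype.ofFinite V
  by_contra hreach
  set K' := K.deleteEdges {s(u, v)}
  set R : Set V := {w | K'.Reachable u w}
  have hR : ∀ a ∈ R, ∀ b, K'.Adj a b → b ∈ R := fun a ha b hab => ha.trans hab.reachable
  have hKR : ∀ a : R, ((K'.induce R).neighborSet a).ncard = (K'.neighborSet a).ncard := by
    intro a
    rw [← Set.ncard_image_of_injective _ Subtype.val_injective]
    congr 1
    ext b
    exact ⟨fun ⟨b', hb', hb⟩ => hb ▸ hb', fun hb => ⟨⟨b, hR a a.2 b hb⟩, hb, rfl⟩⟩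
  have hdeg : ∀ a : R, (K'.induce R).degree a = (K'.neighborSet a).ncard := by
    intro a
    rw [← hKR, ← card_neighborSet_eq_degree, ← Nat.card_eq_fintype_card, Nat.card_coe_set_eq]
  have hu : Odd ((K'.induce R).degree ⟨u, Reachable.refl u⟩) := by
    have : K'.neighborSet u = K.neighborSet u \ {v} := by
      ext b
      simp [K', deleteEdges_adj, huv.ne, and_comm]
    rw [hdeg, this, Set.ncard_sdiff_singleton_of_mem (show v ∈ K.neighborSet u from huv)]
    exact Nat.Even.sub_odd ((Set.ncard_pos (Set.toFinite _)).mpr ⟨v, huv⟩) (heven u) odd_one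
  obtain ⟨w, hwu, hw⟩ := (K'.induce R).exists_ne_odd_degree_of_exists_odd_degree _ hu
  have hwu' : (w : V) ≠ u := fun h => hwu (Subtype.ext h)
  have hwv : (w : V) ≠ v := fun h => hreach (h ▸ w.2)
  have : K'.neighborSet w = K.neighborSet w := by
    ext b
    simp [K', deleteEdges_adj, hwu', hwv]
  rw [hdeg, this] at hw
  exact Nat.not_even_iff_odd.mpr hw (heven w)

lemma mem_edges_of_isCycle_of_adj (hdeg : ∀ w, (K.neighborSet w).ncard ≤ 2) {a : V}
    {C : K.Walk a a} (hC : C.IsCycle) {v w : V} (hv : v ∈ C.support) (hvw : K.Adj v w) :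
    s(v, w) ∈ C.edges := by
  have hsub : C.toSubgraph.neighborSet v ⊆ K.neighborSet v := fun _ h => C.toSubgraph.adj_sub h
  have heq : C.toSubgraph.neighborSet v = K.neighborSet v :=
    Set.eq_of_subset_of_ncard_le hsub
      (by rw [hC.ncard_neighborSet_toSubgraph_eq_two hv]; exact hdeg v) (Set.toFinite _)
  have hw : w ∈ C.toSubgraph.neighborSet v := heq ▸ hvw
  exact Walk.adj_toSubgraph_iff_mem_edges.mp hw

lemma mem_support_of_isCycle_of_reachable (hdeg : ∀ w, (K.neighborSet w).ncard ≤ 2) {a : V}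
    {C : K.Walk a a} (hC : C.IsCycle) {v w : V} (hv : v ∈ C.support) (hvw : K.Reachable v w) :
    w ∈ C.support := by
  obtain ⟨p⟩ := hvw
  induction p with
  | nil => exact hv
  | cons h _ ih =>
    exact ih (C.snd_mem_support_of_mem_edges (mem_edges_of_isCycle_of_adj hdeg hC hv h))

lemma exists_isCycle_mem_edges_of_reachable (hdeg : ∀ w, (K.neighborSet w).ncard = 2)
    {e f : Sym2 V} (he : e ∈ K.edgeSet) (hf : f ∈ K.edgeSet) {u w : V} (hu : u ∈ e) (hw : w ∈ f)
    (huw : K.Reachable u w) :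
    ∃ (a : V) (C : K.Walk a a), C.IsCycle ∧ e ∈ C.edges ∧ f ∈ C.edges := by
  have hle : ∀ v, (K.neighborSet v).ncard ≤ 2 := fun v => (hdeg v).le
  have hu' : K.Adj u (Sym2.Mem.other hu) := by rwa [← mem_edgeSet, Sym2.other_spec hu]
  have hw' : K.Adj w (Sym2.Mem.other hw) := by rwa [← mem_edgeSet, Sym2.other_spec hw]
  obtain ⟨a, C, hC, hCe⟩ := adj_and_reachable_delete_edges_iff_exists_cycle.mp
    ⟨hu', reachable_deleteEdges_of_even (fun v => hdeg v ▸ even_two) hu'⟩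
  have hCf := mem_edges_of_isCycle_of_adj hle hC
    (mem_support_of_isCycle_of_reachable hle hC (C.fst_mem_support_of_mem_edges hCe) huw) hw'
  rw [Sym2.other_spec hu] at hCe
  rw [Sym2.other_spec hw] at hCf
  exact ⟨a, C, hC, hCe, hCf⟩

end TwoRegular

section Kempe

variable {H : SimpleGraph V} {γ : Sym2 V → Color} {x y : Color}

lemma injOn_color_neighborSet (hγ : γ ∈ EC H) (v : V) :
    Set.InjOn (fun w => γ s(v, w)) (H.neighborSet v) := by
  intro w hw w' hw' h
  by_contra hne
  exact hγ.2.2 _ hw _ hw' (edgesAdj_mk_mk hne) h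

lemma image_color_neighborSet [Finite V] (hcubic : IsCubic H) (hγ : γ ∈ EC H) (v : V) :
    (fun w => γ s(v, w)) '' H.neighborSet v = colorSet :=
  Set.eq_of_subset_of_ncard_le (Set.image_subset_iff.mpr fun _ hw => hγ.1 _ hw)
    (by rw [ncard_colorSet, (injOn_color_neighborSet hγ v).ncard_image, hcubic v])
    (Set.toFinite _)

def kempeGraph (H : SimpleGraph V) (γ : Sym2 V → Color) (x y : Color) : SimpleGraph V :=
  fromEdgeSet {e ∈ H.edgeSet | γ e = x ∨ γ e = y}

lemma kempeGraph_adj {u w : V} :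
    (kempeGraph H γ x y).Adj u w ↔ H.Adj u w ∧ (γ s(u, w) = x ∨ γ s(u, w) = y) := by
  rw [kempeGraph, fromEdgeSet_adj]
  exact ⟨fun h => h.1, fun h => ⟨h, h.1.ne⟩⟩

lemma mem_edgeSet_kempeGraph {e : Sym2 V} :
    e ∈ (kempeGraph H γ x y).edgeSet ↔ e ∈ H.edgeSet ∧ (γ e = x ∨ γ e = y) := by
  induction e using Sym2.ind
  exact kempeGraph_adj

lemma kempeGraph_le : kempeGraph H γ x y ≤ H := fun _ _ h => (kempeGraph_adj.mp h).1

lemma ncard_neighborSet_kempeGraph [Finite V] (hcubic : IsCubic H) (hγ : γ ∈ EC H)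
    (hx : x ∈ colorSet) (hy : y ∈ colorSet) (hxy : x ≠ y) (v : V) :
    ((kempeGraph H γ x y).neighborSet v).ncard = 2 := by
  have himg : (fun w => γ s(v, w)) '' (kempeGraph H γ x y).neighborSet v = {x, y} := by
    have : (kempeGraph H γ x y).neighborSet v =
        H.neighborSet v ∩ (fun w => γ s(v, w)) ⁻¹' {x, y} := Set.ext fun _ => kempeGraph_adj
    rw [this, Set.image_inter_preimage, image_color_neighborSet hcubic hγ, Set.inter_eq_right]
    exact Set.insert_subset hx (Set.singleton_subset_iff.mpr hy)
  have hinj : Set.InjOn (fun w => γ s(v, w)) ((kempeGraph H γ x y).neighborSet v) :=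
    (injOn_color_neighborSet hγ v).mono fun _ hw => (kempeGraph_adj.mp hw).1
  rw [← Set.ncard_pair hxy, ← himg, hinj.ncard_image]

lemma inCommonKempeCycle_of_reachable [Finite V] (hcubic : IsCubic H) (hγ : γ ∈ EC H)
    (hx : x ∈ colorSet) (hy : y ∈ colorSet) (hxy : x ≠ y) {e f : Sym2 V} (he : e ∈ H.edgeSet)
    (hf : f ∈ H.edgeSet) (hex : γ e = x ∨ γ e = y) (hfx : γ f = x ∨ γ f = y) {u w : V}
    (hu : u ∈ e) (hw : w ∈ f) (huw : (kempeGraph H γ x y).Reachable u w) :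
    InCommonKempeCycle H γ e f := by
  obtain ⟨a, C, hC, hCe, hCf⟩ := exists_isCycle_mem_edges_of_reachable
    (ncard_neighborSet_kempeGraph hcubic hγ hx hy hxy) (mem_edgeSet_kempeGraph.mpr ⟨he, hex⟩)
    (mem_edgeSet_kempeGraph.mpr ⟨hf, hfx⟩) hu hw huw
  refine ⟨x, hx, y, hy, hxy, a, C.mapLe kempeGraph_le, hC.mapLe _, fun e' he' => ?_, ?_, ?_⟩
    <;> rw [Walk.edges_mapLe_eq_edges] at *
  exacts [(mem_edgeSet_kempeGraph.mp (C.edges_subset_edgeSet he')).2, hCe, hCf]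

open scoped Classical in
/-- The swap of `x` and `y` is applied to every edge meeting the `xy`-Kempe chain through `u`:
on the edges of the third colour it is the identity. -/
noncomputable def kempeSwap (H : SimpleGraph V) (γ : Sym2 V → Color) (x y : Color) (u : V) :
    Sym2 V → Color :=
  fun e => if ∃ w ∈ e, (kempeGraph H γ x y).Reachable u w then Equiv.swap x y (γ e) else γ e

variable {u : V} {e f : Sym2 V}

lemma kempeSwap_of_reachable (h : ∃ w ∈ e, (kempeGraph H γ x y).Reachable u w) :
    kempeSwap H γ x y u e = Equiv.swap x y (γ e) := if_pos h

lemma kempeSwap_of_not_reachable (h : ¬ ∃ w ∈ e, (kempeGraph H γ x y).Reachable u w) :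
    kempeSwap H γ x y u e = γ e := if_neg h

lemma kempeSwap_of_mem (hu : u ∈ e) : kempeSwap H γ x y u e = Equiv.swap x y (γ e) :=
  kempeSwap_of_reachable ⟨u, hu, Reachable.refl u⟩

/-- An `x`/`y`-coloured `e` would extend the chain to `f`, so `e` has neither colour. -/
lemma kempeSwap_eq_self_of_edgesAdj (he : e ∈ H.edgeSet) (hef : EdgesAdj e f)
    (hRe : ∃ w ∈ e, (kempeGraph H γ x y).Reachable u w)
    (hRf : ¬ ∃ w ∈ f, (kempeGraph H γ x y).Reachable u w) : kempeSwap H γ x y u e = γ e := by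
  obtain ⟨z, hze, hzf⟩ := hef.2
  obtain ⟨w, hwe, huw⟩ := hRe
  have hex : ¬ (γ e = x ∨ γ e = y) := fun hex =>
    hRf ⟨z, hzf, reachable_of_mem_edge (mem_edgeSet_kempeGraph.mpr ⟨he, hex⟩) hwe hze huw⟩
  rw [not_or] at hex
  rw [kempeSwap_of_reachable ⟨w, hwe, huw⟩, Equiv.swap_apply_of_ne_of_ne hex.1 hex.2]

lemma kempeSwap_mem_EC (hγ : γ ∈ EC H) (hx : x ∈ colorSet) (hy : y ∈ colorSet) (u : V) :
    kempeSwap H γ x y u ∈ EC H := by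
  refine ⟨fun e he => ?_, fun e he => ?_, fun e he f hf hef => ?_⟩
  · unfold kempeSwap
    split_ifs
    exacts [(swap_mem_colorSet_iff hx hy).mpr (hγ.1 e he), hγ.1 e he]
  · unfold kempeSwap
    split_ifs
    exacts [by rw [hγ.2.1 e he, swap_apply_zero hx hy], hγ.2.1 e he]
  have hγef := hγ.2.2 e he f hf hef
  by_cases hRe : ∃ w ∈ e, (kempeGraph H γ x y).Reachable u w <;>
    by_cases hRf : ∃ w ∈ f, (kempeGraph H γ x y).Reachable u w
  · rw [kempeSwap_of_reachable hRe, kempeSwap_of_reachable hRf]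
    exact (Equiv.swap x y).injective.ne hγef
  · rwa [kempeSwap_eq_self_of_edgesAdj he hef hRe hRf, kempeSwap_of_not_reachable hRf]
  · rwa [kempeSwap_eq_self_of_edgesAdj hf hef.symm hRf hRe, kempeSwap_of_not_reachable hRe]
  · rwa [kempeSwap_of_not_reachable hRe, kempeSwap_of_not_reachable hRf]

lemma kempeGraph_kempeSwap : kempeGraph H (kempeSwap H γ x y u) x y = kempeGraph H γ x y := by
  ext a b
  rw [kempeGraph_adj, kempeGraph_adj]
  refine and_congr_right fun _ => ?_
  unfold kempeSwap
  split_ifs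
  exacts [swap_eq_left_or_right_iff, Iff.rfl]

lemma kempeSwap_kempeSwap : kempeSwap H (kempeSwap H γ x y u) x y u = γ := by
  funext e
  by_cases h : ∃ w ∈ e, (kempeGraph H γ x y).Reachable u w
  · rw [kempeSwap_of_reachable (by rwa [kempeGraph_kempeSwap]), kempeSwap_of_reachable h,
      Equiv.swap_apply_self]
  · rw [kempeSwap_of_not_reachable (by rwa [kempeGraph_kempeSwap]), kempeSwap_of_not_reachable h]

lemma kempeSwap_of_not_inCommonKempeCycle [Finite V] (hcubic : IsCubic H) (hγ : γ ∈ EC H)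
    (hx : x ∈ colorSet) (hy : y ∈ colorSet) (hxy : x ≠ y) (he : e ∈ H.edgeSet)
    (hf : f ∈ H.edgeSet) (hu : u ∈ e) (hex : γ e = x ∨ γ e = y)
    (hef : ¬ InCommonKempeCycle H γ e f) : kempeSwap H γ x y u f = γ f := by
  by_cases hRf : ∃ w ∈ f, (kempeGraph H γ x y).Reachable u w
  · obtain ⟨w, hw, huw⟩ := hRf
    have hfx : ¬ (γ f = x ∨ γ f = y) := fun hfx =>
      hef (inCommonKempeCycle_of_reachable hcubic hγ hx hy hxy he hf hex hfx hu hw huw)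
    rw [not_or] at hfx
    rw [kempeSwap_of_reachable ⟨w, hw, huw⟩, Equiv.swap_apply_of_ne_of_ne hfx.1 hfx.2]
  · exact kempeSwap_of_not_reachable hRf

end Kempe

lemma InCommonKempeCycle.symm {G : SimpleGraph V} {γ : Sym2 V → Color} {e f : Sym2 V}
    (h : InCommonKempeCycle G γ e f) : InCommonKempeCycle G γ f e :=
  let ⟨x, hx, y, hy, hxy, a, C, hC, hcol, he, hf⟩ := h
  ⟨x, hx, y, hy, hxy, a, C, hC, hcol, hf, he⟩

lemma OrthogonalEdges.symm {G : SimpleGraph V} {d₁ d₂ : Sym2 V} (h : OrthogonalEdges G d₁ d₂) :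
    OrthogonalEdges G d₂ d₁ :=
  ⟨h.2.1, h.1, fun γ hγ hc => h.2.2 γ hγ hc.symm⟩

section Orthogonal

variable [Finite V] {H : SimpleGraph V} {d₁ d₂ : Sym2 V}

lemma ncard_le_ncard_of_orthogonal (hcubic : IsCubic H) (horth : OrthogonalEdges H d₁ d₂)
    {x x' : Color} (hx : x ∈ colorSet) (hx' : x' ∈ colorSet) (hxx' : x ≠ x') (y : Color) :
    {γ ∈ EC H | γ d₁ = x ∧ γ d₂ = y}.ncard ≤ {γ ∈ EC H | γ d₁ = x' ∧ γ d₂ = y}.ncard := by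
  have hu := Sym2.out_fst_mem d₁
  refine Set.ncard_le_ncard_of_injOn (fun γ => kempeSwap H γ x x' d₁.out.1) ?_ ?_
  · rintro γ ⟨hγ, h₁, h₂⟩
    refine ⟨kempeSwap_mem_EC hγ hx hx' _, ?_, ?_⟩
    · rw [kempeSwap_of_mem hu, h₁, Equiv.swap_apply_left]
    · rw [kempeSwap_of_not_inCommonKempeCycle hcubic hγ hx hx' hxx' horth.1 horth.2.1 hu
        (Or.inl h₁) (horth.2.2 γ hγ), h₂]
  · intro γ _ γ' _ h
    simpa only [kempeSwap_kempeSwap] using congrArg (fun γ => kempeSwap H γ x x' d₁.out.1) h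

lemma ncard_eq_ncard_of_orthogonal_left (hcubic : IsCubic H) (horth : OrthogonalEdges H d₁ d₂)
    {x x' : Color} (hx : x ∈ colorSet) (hx' : x' ∈ colorSet) (y : Color) :
    {γ ∈ EC H | γ d₁ = x ∧ γ d₂ = y}.ncard = {γ ∈ EC H | γ d₁ = x' ∧ γ d₂ = y}.ncard := by
  rcases eq_or_ne x x' with rfl | hxx'
  · rfl
  exact le_antisymm (ncard_le_ncard_of_orthogonal hcubic horth hx hx' hxx' y)
    (ncard_le_ncard_of_orthogonal hcubic horth hx' hx hxx'.symm y)

lemma ncard_eq_ncard_of_orthogonal (hcubic : IsCubic H) (horth : OrthogonalEdges H d₁ d₂)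
    {x y x' y' : Color} (hx : x ∈ colorSet) (hy : y ∈ colorSet) (hx' : x' ∈ colorSet)
    (hy' : y' ∈ colorSet) :
    {γ ∈ EC H | γ d₁ = x ∧ γ d₂ = y}.ncard = {γ ∈ EC H | γ d₁ = x' ∧ γ d₂ = y'}.ncard := by
  have hcomm : ∀ x y : Color,
      {γ ∈ EC H | γ d₁ = x ∧ γ d₂ = y} = {γ ∈ EC H | γ d₂ = y ∧ γ d₁ = x} := fun _ _ =>
    Set.sep_ext_iff.mpr fun _ _ => and_comm
  rw [ncard_eq_ncard_of_orthogonal_left hcubic horth hx hx' y, hcomm, hcomm,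
    ncard_eq_ncard_of_orthogonal_left hcubic horth.symm hy hy' x']

end Orthogonal

lemma exists_injective_fin_three_range_eq {α : Type*} {δ : Set α} (h : δ.ncard = 3) :
    ∃ s : Fin 3 → α, Function.Injective s ∧ Set.range s = δ := by
  obtain ⟨a, b, c, hab, hac, hbc, rfl⟩ := Set.ncard_eq_three.mp h
  refine ⟨![a, b, c], fun i j hij => ?_, ?_⟩
  · fin_cases i <;> fin_cases j <;> simp_all [eq_comm]
  · ext x
    simp [or_comm, or_left_comm, eq_comm]

lemma ncard_injective_colorings_fin_three :
    {t : Fin 3 → Color | Function.Injective t ∧ ∀ i, t i ∈ colorSet}.ncard = 6 := by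
  simp_rw [mem_colorSet_iff_ne_zero]
  rw [Set.ncard_eq_toFinset_card']
  decide

lemma range_eq_colorSet {t : Fin 3 → Color} (ht : Function.Injective t ∧ ∀ i, t i ∈ colorSet) :
    Set.range t = colorSet :=
  Set.eq_of_subset_of_ncard_le (Set.range_subset_iff.mpr ht.2)
    (by rw [ncard_colorSet, Set.ncard_range_of_injective ht.1, Nat.card_fin]) (Set.toFinite _)

section Decomposition

variable {H : SimpleGraph V} {γ : Sym2 V → Color}

def colorClass (H : SimpleGraph V) (γ : Sym2 V → Color) (x : Color) : Set (Sym2 V) :=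
  {e ∈ H.edgeSet | γ e = x}

def decompOf (H : SimpleGraph V) (γ : Sym2 V → Color) : Set (Set (Sym2 V)) :=
  colorClass H γ '' colorSet

lemma colorClass_nonempty [Finite V] [Nonempty V] (hcubic : IsCubic H) (hγ : γ ∈ EC H)
    {x : Color} (hx : x ∈ colorSet) : (colorClass H γ x).Nonempty := by
  rw [← image_color_neighborSet hcubic hγ (Classical.arbitrary V)] at hx
  obtain ⟨w, hw, hwx⟩ := hx
  exact ⟨_, hw, hwx⟩

lemma decompOf_mem_ED [Finite V] [Nonempty V] (hcubic : IsCubic H) (hγ : γ ∈ EC H) :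
    decompOf H γ ∈ ED H := by
  have hinj : Set.InjOn (colorClass H γ) colorSet := fun x hx x' _ h => by
    obtain ⟨e, he, rfl⟩ := colorClass_nonempty hcubic hγ hx
    have he' : e ∈ colorClass H γ x' := h ▸ ⟨he, rfl⟩
    exact he'.2
  refine ⟨by rw [decompOf, hinj.ncard_image, ncard_colorSet], ?_, fun e he => ?_, ?_⟩
  · rintro _ ⟨x, -, rfl⟩ e he
    exact he.1
  · refine ⟨colorClass H γ (γ e), ⟨⟨γ e, hγ.1 e he, rfl⟩, he, rfl⟩, ?_⟩
    rintro _ ⟨⟨x, -, rfl⟩, hes⟩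
    rw [hes.2]
  · rintro _ ⟨x, -, rfl⟩ e he f hf hef
    exact hγ.2.2 e he.1 f hf.1 hef (he.2.trans hf.2.symm)

lemma sameClass_decompOf_iff (hγ : γ ∈ EC H) {d₁ d₂ : Sym2 V} (hd₁ : d₁ ∈ H.edgeSet)
    (hd₂ : d₂ ∈ H.edgeSet) : SameClass (decompOf H γ) d₁ d₂ ↔ γ d₁ = γ d₂ := by
  constructor
  · rintro ⟨_, ⟨x, -, rfl⟩, h₁, h₂⟩
    rw [h₁.2, h₂.2]
  · intro h
    exact ⟨colorClass H γ (γ d₁), ⟨γ d₁, hγ.1 _ hd₁, rfl⟩, ⟨hd₁, rfl⟩, ⟨hd₂, h.symm⟩⟩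

end Decomposition

section ColoringOfDecomposition

variable {ι : Type*} {H : SimpleGraph V} {s : ι → Set (Sym2 V)} {t : ι → Color}

open scoped Classical in
noncomputable def coloringOf (s : ι → Set (Sym2 V)) (t : ι → Color) : Sym2 V → Color :=
  fun e => if h : ∃ i, e ∈ s i then t h.choose else 0

lemma index_eq_of_mem_of_mem (hs : Function.Injective s) (hED : Set.range s ∈ ED H) {e : Sym2 V}
    {i j : ι} (hi : e ∈ s i) (hj : e ∈ s j) : i = j := by
  obtain ⟨_, -, huniq⟩ := hED.2.2.1 e (hED.2.1 _ ⟨i, rfl⟩ hi)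
  exact hs ((huniq _ ⟨⟨i, rfl⟩, hi⟩).trans (huniq _ ⟨⟨j, rfl⟩, hj⟩).symm)

lemma exists_index_mem_of_mem_edgeSet (hED : Set.range s ∈ ED H) {e : Sym2 V} (he : e ∈ H.edgeSet) :
    ∃ i, e ∈ s i := by
  obtain ⟨_, ⟨⟨i, rfl⟩, hi⟩, -⟩ := hED.2.2.1 e he
  exact ⟨i, hi⟩

lemma coloringOf_apply (hs : Function.Injective s) (hED : Set.range s ∈ ED H) {e : Sym2 V}
    {i : ι} (hi : e ∈ s i) : coloringOf s t e = t i := by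
  have h : ∃ i, e ∈ s i := ⟨i, hi⟩
  rw [coloringOf, dif_pos h, index_eq_of_mem_of_mem hs hED h.choose_spec hi]

lemma coloringOf_apply_of_notMem (hED : Set.range s ∈ ED H) {e : Sym2 V} (he : e ∉ H.edgeSet) :
    coloringOf s t e = 0 :=
  dif_neg fun ⟨i, hi⟩ => he (hED.2.1 _ ⟨i, rfl⟩ hi)

lemma coloringOf_mem_EC (hs : Function.Injective s) (hED : Set.range s ∈ ED H)
    (ht : Function.Injective t ∧ ∀ i, t i ∈ colorSet) : coloringOf s t ∈ EC H := by
  refine ⟨fun e he => ?_, fun e he => coloringOf_apply_of_notMem hED he, fun e he f hf hef => ?_⟩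
  · obtain ⟨i, hi⟩ := exists_index_mem_of_mem_edgeSet hED he
    rw [coloringOf_apply hs hED hi]
    exact ht.2 i
  · obtain ⟨i, hi⟩ := exists_index_mem_of_mem_edgeSet hED he
    obtain ⟨j, hj⟩ := exists_index_mem_of_mem_edgeSet hED hf
    rw [coloringOf_apply hs hED hi, coloringOf_apply hs hED hj]
    intro hij
    exact hED.2.2.2 _ ⟨i, rfl⟩ e hi f (ht.1 hij ▸ hj) hef

lemma colorClass_coloringOf (hs : Function.Injective s) (hED : Set.range s ∈ ED H)
    (ht : Function.Injective t) (i : ι) : colorClass H (coloringOf s t) (t i) = s i := by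
  ext e
  refine ⟨fun ⟨he, hei⟩ => ?_, fun hi => ⟨hED.2.1 _ ⟨i, rfl⟩ hi, coloringOf_apply hs hED hi⟩⟩
  obtain ⟨j, hj⟩ := exists_index_mem_of_mem_edgeSet hED he
  rw [coloringOf_apply hs hED hj] at hei
  exact ht hei ▸ hj

lemma decompOf_coloringOf (hs : Function.Injective s) (hED : Set.range s ∈ ED H)
    (ht : Function.Injective t) (hrange : Set.range t = colorSet) :
    decompOf H (coloringOf s t) = Set.range s := by
  rw [decompOf, ← hrange, ← Set.range_comp]
  exact congrArg Set.range (funext (colorClass_coloringOf hs hED ht))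

lemma eq_coloringOf_of_decompOf_eq (hs : Function.Injective s) (hED : Set.range s ∈ ED H)
    {γ : Sym2 V → Color} (hγ : γ ∈ EC H) (hγs : decompOf H γ = Set.range s) {e : ι → Sym2 V}
    (he : ∀ i, e i ∈ s i) : γ = coloringOf s (fun i => γ (e i)) := by
  funext f
  by_cases hf : f ∈ H.edgeSet
  · obtain ⟨i, hi⟩ := exists_index_mem_of_mem_edgeSet hED hf
    rw [coloringOf_apply hs hED hi]
    exact (sameClass_decompOf_iff hγ hf (hED.2.1 _ ⟨i, rfl⟩ (he i))).mp
      (hγs ▸ ⟨s i, ⟨i, rfl⟩, hi, he i⟩)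
  · rw [coloringOf_apply_of_notMem hED hf, hγ.2.1 f hf]

end ColoringOfDecomposition

lemma ncard_fiber_decompOf [Finite V] [Nonempty V] {H : SimpleGraph V} (hcubic : IsCubic H)
    {δ : Set (Set (Sym2 V))} (hδ : δ ∈ ED H) : {γ ∈ EC H | decompOf H γ = δ}.ncard = 6 := by
  obtain ⟨s, hs, rfl⟩ := exists_injective_fin_three_range_eq hδ.1
  have habc : Function.Injective ![colA, colB, colC] ∧ ∀ i, ![colA, colB, colC] i ∈ colorSet := by
    simp_rw [mem_colorSet_iff_ne_zero]
    decide
  have hne : ∀ i, (s i).Nonempty := fun i => by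
    rw [← colorClass_coloringOf hs hδ habc.1 i]
    exact colorClass_nonempty hcubic (coloringOf_mem_EC hs hδ habc) (habc.2 i)
  choose e he using hne
  have hmem : ∀ i, e i ∈ H.edgeSet := fun i => hδ.2.1 _ ⟨i, rfl⟩ (he i)
  rw [← ncard_injective_colorings_fin_three]
  symm
  refine Set.ncard_congr (fun t _ => coloringOf s t)
    (fun t ht => ⟨coloringOf_mem_EC hs hδ ht,
      decompOf_coloringOf hs hδ ht.1 (range_eq_colorSet ht)⟩)
    (fun t t' _ _ h => funext fun i => ?_) (fun γ hγ => ?_)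
  · rw [← coloringOf_apply hs hδ (he i) (t := t), h, coloringOf_apply hs hδ (he i)]
  obtain ⟨hγ, hγs⟩ := hγ
  refine ⟨fun i => γ (e i), ⟨fun i j hij => ?_, fun i => hγ.1 _ (hmem i)⟩,
    (eq_coloringOf_of_decompOf_eq hs hδ hγ hγs he).symm⟩
  obtain ⟨_, hc, hi, hj⟩ := (sameClass_decompOf_iff hγ (hmem i) (hmem j)).mpr hij
  rw [hγs] at hc
  obtain ⟨k, rfl⟩ := hc
  exact (index_eq_of_mem_of_mem hs hδ (he i) hi).trans (index_eq_of_mem_of_mem hs hδ (he j) hj).symm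

lemma ncard_eq_mul_of_mapsTo {α β : Type*} {S : Set α} {T : Set β} {f : α → β}
    (hS : S.Finite) (hT : T.Finite) (hf : Set.MapsTo f S T) {k : ℕ}
    (hk : ∀ b ∈ T, {a ∈ S | f a = b}.ncard = k) : S.ncard = k * T.ncard := by
  classical
  rw [Set.ncard_eq_toFinset_card _ hS, Set.ncard_eq_toFinset_card _ hT,
    Finset.card_eq_sum_card_fiberwise fun a ha => hT.mem_toFinset.mpr (hf (hS.mem_toFinset.mp ha)),
    Finset.sum_congr rfl fun b hb => ?_, Finset.sum_const, smul_eq_mul, mul_comm]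
  rw [← hk b (hT.mem_toFinset.mp hb), ← Set.ncard_coe_finset]
  congr 1
  ext a
  simp

section Counting

variable [Finite V] {H : SimpleGraph V} {d₁ d₂ : Sym2 V}

lemma ncard_EC_eq_nine_mul (hd₁ : d₁ ∈ H.edgeSet) (hd₂ : d₂ ∈ H.edgeSet) {N : ℕ}
    (hN : ∀ x ∈ colorSet, ∀ y ∈ colorSet, {γ ∈ EC H | γ d₁ = x ∧ γ d₂ = y}.ncard = N) :
    (EC H).ncard = 9 * N := by
  refine (ncard_eq_mul_of_mapsTo (Set.toFinite _) (Set.toFinite (colorSet ×ˢ colorSet))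
    (f := fun γ => (γ d₁, γ d₂)) (fun γ hγ => ⟨hγ.1 _ hd₁, hγ.1 _ hd₂⟩) fun p hp => ?_).trans
    (by rw [Set.ncard_prod, ncard_colorSet, mul_comm])
  simpa only [Prod.ext_iff] using hN p.1 hp.1 p.2 hp.2

lemma ncard_EC_eq_six_mul_ncard_ED [Nonempty V] (hcubic : IsCubic H) :
    (EC H).ncard = 6 * (ED H).ncard :=
  ncard_eq_mul_of_mapsTo (Set.toFinite _) (Set.toFinite _)
    (fun _ hγ => decompOf_mem_ED hcubic hγ) (fun _ hδ => ncard_fiber_decompOf hcubic hδ)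

lemma ncard_sameColor_eq_three_mul (hd₁ : d₁ ∈ H.edgeSet) {N : ℕ}
    (hN : ∀ x ∈ colorSet, ∀ y ∈ colorSet, {γ ∈ EC H | γ d₁ = x ∧ γ d₂ = y}.ncard = N) :
    {γ ∈ EC H | γ d₁ = γ d₂}.ncard = 3 * N := by
  refine (ncard_eq_mul_of_mapsTo (Set.toFinite _) (Set.toFinite colorSet) (f := fun γ => γ d₁)
    (fun γ hγ => hγ.1.1 _ hd₁) fun x hx => ?_).trans (by rw [ncard_colorSet, mul_comm])
  rw [← hN x hx x hx]
  congr 1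
  ext γ
  simp only [Set.mem_ofPred_eq]
  grind

lemma ncard_sameColor_eq_six_mul (hcubic : IsCubic H) (hd₁ : d₁ ∈ H.edgeSet)
    (hd₂ : d₂ ∈ H.edgeSet) :
    {γ ∈ EC H | γ d₁ = γ d₂}.ncard = 6 * {D ∈ ED H | SameClass D d₁ d₂}.ncard := by
  have : Nonempty V := ⟨d₁.out.1⟩
  refine ncard_eq_mul_of_mapsTo (Set.toFinite _) (Set.toFinite _) (f := decompOf H)
    (T := {D ∈ ED H | SameClass D d₁ d₂})
    (fun γ hγ => ⟨decompOf_mem_ED hcubic hγ.1, (sameClass_decompOf_iff hγ.1 hd₁ hd₂).mpr hγ.2⟩)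
    fun δ hδ => ?_
  obtain ⟨hδ, hsame⟩ := hδ
  rw [← ncard_fiber_decompOf hcubic hδ]
  congr 1
  ext γ
  constructor
  · rintro ⟨⟨hγ, -⟩, rfl⟩
    exact ⟨hγ, rfl⟩
  · rintro ⟨hγ, rfl⟩
    exact ⟨⟨hγ, (sameClass_decompOf_iff hγ hd₁ hd₂).mp hsame⟩, rfl⟩

end Counting

theorem statement_1_general {V : Type*} [Fintype V] (H : SimpleGraph V)
    (hcubic : IsCubic H) (hcol : (EC H).Nonempty)
    (d₁ d₂ : Sym2 V) (horth : OrthogonalEdges H d₁ d₂) :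
    ∃ J : ℕ, 0 < J ∧ (ED H).ncard = 3 * J ∧ (EC H).ncard = 18 * J ∧
      {D ∈ ED H | SameClass D d₁ d₂}.ncard = J ∧
      ∀ x ∈ colorSet, ∀ y ∈ colorSet,
        {γ ∈ EC H | γ d₁ = x ∧ γ d₂ = y}.ncard = 2 * J := by
  have : Nonempty V := ⟨d₁.out.1⟩
  have hA : colA ∈ colorSet := Set.mem_insert _ _
  have hN : ∀ x ∈ colorSet, ∀ y ∈ colorSet, {γ ∈ EC H | γ d₁ = x ∧ γ d₂ = y}.ncard =
      {γ ∈ EC H | γ d₁ = colA ∧ γ d₂ = colA}.ncard := fun x hx y hy =>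
    ncard_eq_ncard_of_orthogonal hcubic horth hx hy hA hA
  have h₁ := ncard_EC_eq_nine_mul horth.1 horth.2.1 hN
  have h₂ := ncard_EC_eq_six_mul_ncard_ED hcubic
  have h₃ := ncard_sameColor_eq_three_mul horth.1 hN
  have h₄ := ncard_sameColor_eq_six_mul hcubic horth.1 horth.2.1
  have hpos : 0 < (EC H).ncard := (Set.ncard_pos (Set.toFinite _)).mpr hcol
  refine ⟨_, by omega, by omega, by omega, rfl, fun x hx y hy => ?_⟩
  rw [hN x hx y hy]
  omega

/-- **Kászonyi, Theorem 3.3(A).** If `H` is a connected cubic edge-3-colorable graph with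
orthogonal edges `d₁`, `d₂`, then there is a positive integer `J` with
`card ED(H) = 3J`, `card EC(H) = 18J`, `card {δ ∈ ED(H) : d₁ ∼ d₂} = J`, and
`card {γ ∈ EC(H) : γ(d₁) = x, γ(d₂) = y} = 2J` for all colors `x`, `y`. -/
theorem statement_1 {V : Type*} [Fintype V] (H : SimpleGraph V)
    (hconn : H.Connected) (hcubic : IsCubic H) (hcol : (EC H).Nonempty)
    (d₁ d₂ : Sym2 V) (horth : OrthogonalEdges H d₁ d₂) :
    ∃ J : ℕ, 0 < J ∧ (ED H).ncard = 3 * J ∧ (EC H).ncard = 18 * J ∧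
      {D ∈ ED H | SameClass D d₁ d₂}.ncard = J ∧
      ∀ x ∈ colorSet, ∀ y ∈ colorSet,
        {γ ∈ EC H | γ d₁ = x ∧ γ d₂ = y}.ncard = 2 * J :=
  statement_1_general H hcubic hcol d₁ d₂ horth

end SnarkPaper
end
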